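/- Let n = 1, a₁ = -1, a₃ = 1 and 0 < a₂ < 32/(15√6) (case DFF, small a₂). Suppose φ ∈ H¹(ℝ)\{0} satisfies K(φ) = 0 and P(φ) = 0 (with K and P as for the triple power equation in 1D). Then ∂²_λ S(φ^λ)|_{λ=1} = -(4/81)‖φ‖³_{L³} - (1/54)‖φ‖⁵_{L⁵} + (5a₂/72)‖φ‖⁴_{L⁴} < 0. -/

import Mathlib

open MeasureTheory

noncomputable def gradSq1 (v : ℝ → ℝ) : ℝ := ∫ x, (deriv v x)^2

noncomputable def lp1 (p : ℕ) (v : ℝ → ℝ) : ℝ := ∫ x, |v x| ^ p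

noncomputable def Kf1 (a₂ : ℝ) (v : ℝ → ℝ) : ℝ :=
  gradSq1 v + lp1 3 v - a₂ * lp1 4 v - lp1 5 v

noncomputable def Sf1 (a₂ : ℝ) (v : ℝ → ℝ) : ℝ :=
  (1/2) * gradSq1 v + (1/3) * lp1 3 v - (a₂/4) * lp1 4 v - (1/5) * lp1 5 v

noncomputable def Pf1 (a₂ : ℝ) (v : ℝ → ℝ) : ℝ :=
  gradSq1 v + (1/6) * lp1 3 v - (a₂/4) * lp1 4 v - (3/10) * lp1 5 v

/-- The rescaling `v^λ(x) = λ^{1/2} v (λ x)` in dimension one. -/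
noncomputable def scal1 (l : ℝ) (v : ℝ → ℝ) : ℝ → ℝ :=
  fun x => l ^ ((1:ℝ)/2) * v (l * x)

/-- `φ ∈ H¹(ℝ)` together with the integrabilities making the functionals
well defined. -/
def Adm1 (v : ℝ → ℝ) : Prop :=
  Differentiable ℝ v ∧ MemLp v 2 volume ∧ MemLp (deriv v) 2 volume ∧
    MemLp v 3 volume ∧ MemLp v 4 volume ∧ MemLp v 5 volume

/-!
For `λ > 0`, `S(φ^λ)` is an explicit combination `∑ cᵢ λ^{pᵢ}` of powers of `λ`, so its second
derivative at `λ = 1` is `‖φ'‖² - ‖φ‖³₃/12 - 3‖φ‖⁵₅/20`, which the constraints `K(φ) = P(φ) = 0`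
turn into `-(4/81)‖φ‖³₃ - (1/54)‖φ‖⁵₅ + (5a₂/72)‖φ‖⁴₄`. Integrating the pointwise AM-GM inequality
`a t³ + b t⁵ ≥ 2√(ab) t⁴` with `a = 4/81`, `b = 1/54` bounds the negative part by
`-(4/(27√6))‖φ‖⁴₄`, and `5a₂/72 < 4/(27√6)` is exactly `a₂ < 32/(15√6)`; finally `‖φ‖⁴₄ > 0`.
-/

open Filter Topology

lemma lp1_scal1 (φ : ℝ → ℝ) (p : ℕ) {l : ℝ} (hl : 0 < l) :
    lp1 p (scal1 l φ) = l ^ ((p : ℝ) / 2 - 1) * lp1 p φ := by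
  have hpow : ∀ x, |l ^ ((1 : ℝ) / 2) * φ (l * x)| ^ p = l ^ ((p : ℝ) / 2) * |φ (l * x)| ^ p := by
    intro x
    rw [abs_mul, abs_of_pos (by positivity), mul_pow, ← Real.rpow_natCast _ p,
      ← Real.rpow_mul hl.le, one_div_mul_eq_div]
  simp_rw [lp1, scal1, hpow]
  rw [integral_const_mul, Measure.integral_comp_mul_left (fun y => |φ y| ^ p), smul_eq_mul,
    abs_of_pos (inv_pos.mpr hl), ← mul_assoc, ← Real.rpow_neg_one l, ← Real.rpow_add hl,
    ← sub_eq_add_neg]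

lemma gradSq1_scal1 {φ : ℝ → ℝ} (hφ : Differentiable ℝ φ) {l : ℝ} (hl : 0 < l) :
    gradSq1 (scal1 l φ) = l ^ 2 * gradSq1 φ := by
  have hderiv : ∀ x, deriv (scal1 l φ) x = l ^ ((1 : ℝ) / 2) * (deriv φ (l * x) * l) := fun x =>
    ((((hφ (l * x)).hasDerivAt).comp x ((hasDerivAt_id x).const_mul l)).const_mul _).deriv.trans
      (by simp)
  have hsq : (l ^ ((1 : ℝ) / 2)) ^ 2 = l := by
    rw [← Real.sqrt_eq_rpow, Real.sq_sqrt hl.le]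
  simp_rw [gradSq1, hderiv, mul_pow, hsq]
  rw [integral_const_mul, integral_mul_const,
    Measure.integral_comp_mul_left (fun y => deriv φ y ^ 2), smul_eq_mul,
    abs_of_pos (inv_pos.mpr hl)]
  field_simp

lemma Sf1_scal1 (a₂ : ℝ) {φ : ℝ → ℝ} (hφ : Differentiable ℝ φ) {l : ℝ} (hl : 0 < l) :
    Sf1 a₂ (scal1 l φ) = (1 / 2) * gradSq1 φ * l ^ (2 : ℝ) + (1 / 3) * lp1 3 φ * l ^ ((1 : ℝ) / 2)
      - (a₂ / 4) * lp1 4 φ * l ^ (1 : ℝ) - (1 / 5) * lp1 5 φ * l ^ ((3 : ℝ) / 2) := by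
  rw [Sf1, gradSq1_scal1 hφ hl, lp1_scal1 φ 3 hl, lp1_scal1 φ 4 hl, lp1_scal1 φ 5 hl,
    Real.rpow_two]
  norm_num
  ring

lemma hasDerivAt_sum_mul_rpow {ι : Type*} [Fintype ι] (c p : ι → ℝ) {l : ℝ} (hl : 0 < l) :
    HasDerivAt (fun l => ∑ i, c i * l ^ p i) (∑ i, c i * p i * l ^ (p i - 1)) l := by
  simp_rw [mul_assoc]
  exact HasDerivAt.fun_sum fun i _ => (Real.hasDerivAt_rpow_const (Or.inl hl.ne')).const_mul (c i)

lemma deriv_deriv_one_of_eventuallyEq_sum_mul_rpow {ι : Type*} [Fintype ι] {F : ℝ → ℝ}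
    (c p : ι → ℝ) (hF : F =ᶠ[𝓝 1] fun l => ∑ i, c i * l ^ p i) :
    deriv (deriv F) 1 = ∑ i, c i * p i * (p i - 1) := by
  have hF' : deriv F =ᶠ[𝓝 1] fun l => ∑ i, c i * p i * l ^ (p i - 1) := by
    filter_upwards [hF.deriv, Ioi_mem_nhds one_pos] with l hl hl0
    exact hl.trans (hasDerivAt_sum_mul_rpow c p hl0).deriv
  rw [hF'.deriv_eq, (hasDerivAt_sum_mul_rpow (fun i => c i * p i) (fun i => p i - 1) one_pos).deriv]
  simp

lemma integrable_abs_pow_of_memLp {v : ℝ → ℝ} {p : ℕ} (hp : p ≠ 0) (hv : MemLp v p) :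
    Integrable fun x => |v x| ^ p := by
  simpa only [Real.norm_eq_abs] using hv.integrable_norm_pow hp

lemma lp1_pos {v : ℝ → ℝ} {p : ℕ} (hp : p ≠ 0) (hc : Continuous v) (hv : v ≠ 0)
    (hvp : MemLp v p) : 0 < lp1 p v := by
  rw [lp1, integral_pos_iff_support_of_nonneg (fun x => by positivity)
    (integrable_abs_pow_of_memLp hp hvp)]
  have hsupp : Function.support (fun x => |v x| ^ p) = Function.support v := by
    ext x
    simp [hp]
  rw [hsupp]
  exact hc.isOpen_support.measure_pos volume (Function.support_nonempty_iff.mpr hv)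

lemma two_mul_sqrt_mul_mul_pow_four_le {a b t : ℝ} (ha : 0 ≤ a) (hb : 0 ≤ b) (ht : 0 ≤ t) :
    2 * √(a * b) * t ^ 4 ≤ a * t ^ 3 + b * t ^ 5 := by
  have hsq : a * t ^ 3 + b * t ^ 5 - 2 * √(a * b) * t ^ 4 = t ^ 3 * (√a - √b * t) ^ 2 := by
    rw [Real.sqrt_mul ha]
    linear_combination (-t ^ 3) * Real.sq_sqrt ha + (-t ^ 5) * Real.sq_sqrt hb
  nlinarith [mul_nonneg (pow_nonneg ht 3) (sq_nonneg (√a - √b * t))]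

lemma two_mul_sqrt_mul_mul_lp1_four_le {a b : ℝ} (ha : 0 ≤ a) (hb : 0 ≤ b) {v : ℝ → ℝ}
    (h3 : MemLp v 3) (h4 : MemLp v 4) (h5 : MemLp v 5) :
    2 * √(a * b) * lp1 4 v ≤ a * lp1 3 v + b * lp1 5 v := by
  have i3 := (integrable_abs_pow_of_memLp (p := 3) (by norm_num) (by exact_mod_cast h3)).const_mul a
  have i4 := (integrable_abs_pow_of_memLp (p := 4) (by norm_num) (by exact_mod_cast h4)).const_mul
    (2 * √(a * b))
  have i5 := (integrable_abs_pow_of_memLp (p := 5) (by norm_num) (by exact_mod_cast h5)).const_mul b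
  rw [lp1, lp1, lp1, ← integral_const_mul, ← integral_const_mul, ← integral_const_mul,
    ← integral_add i3 i5]
  exact integral_mono i4 (i3.add i5) fun x =>
    two_mul_sqrt_mul_mul_pow_four_le ha hb (abs_nonneg _)

theorem stmt13_general (a₂ : ℝ) (ha₂' : a₂ < 32 / (15 * Real.sqrt 6))
    (φ : ℝ → ℝ) (hφ : Adm1 φ) (hφ0 : φ ≠ 0)
    (hK : Kf1 a₂ φ = 0) (hP : Pf1 a₂ φ = 0) :
    deriv (deriv (fun l : ℝ => Sf1 a₂ (scal1 l φ))) 1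
        = -(4/81) * lp1 3 φ - (1/54) * lp1 5 φ + (5*a₂/72) * lp1 4 φ ∧
      -(4/81) * lp1 3 φ - (1/54) * lp1 5 φ + (5*a₂/72) * lp1 4 φ < 0 := by
  obtain ⟨hdiff, -, -, h3, h4, h5⟩ := hφ
  have hF : (fun l => Sf1 a₂ (scal1 l φ)) =ᶠ[𝓝 1] fun l => ∑ i : Fin 4,
      ![gradSq1 φ / 2, lp1 3 φ / 3, -(a₂ / 4 * lp1 4 φ), -(lp1 5 φ / 5)] i
        * l ^ ![(2 : ℝ), 1 / 2, 1, 3 / 2] i := by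
    filter_upwards [Ioi_mem_nhds one_pos] with l hl
    rw [Sf1_scal1 a₂ hdiff hl, Fin.sum_univ_four]
    simp only [Matrix.cons_val]
    ring
  refine ⟨?_, ?_⟩
  · rw [deriv_deriv_one_of_eventuallyEq_sum_mul_rpow _ _ hF, Fin.sum_univ_four]
    simp only [Matrix.cons_val, Kf1, Pf1] at hK hP ⊢
    linarith
  · have hAM := two_mul_sqrt_mul_mul_lp1_four_le (a := 4 / 81) (b := 1 / 54) (by norm_num)
      (by norm_num) h3 h4 h5
    have hsqrt : 2 * √(4 / 81 * (1 / 54)) = 4 / (27 * √6) := by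
      have h6 : √(4 / 81 * (1 / 54)) * √6 = 2 / 27 := by
        rw [← Real.sqrt_mul (by norm_num), show (4 / 81 * (1 / 54) * 6 : ℝ) = (2 / 27) ^ 2 by
          norm_num, Real.sqrt_sq (by norm_num)]
      rw [eq_div_iff (by positivity)]
      linear_combination 54 * h6
    have h4pos := lp1_pos (p := 4) (by norm_num) hdiff.continuous hφ0 (by exact_mod_cast h4)
    have ha₂ : 5 * a₂ / 72 < 4 / (27 * √6) :=
      calc 5 * a₂ / 72 < 5 * (32 / (15 * √6)) / 72 := by gcongr
        _ = 4 / (27 * √6) := by field_simp; norm_num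
    nlinarith

theorem stmt13 (a₂ : ℝ) (ha₂ : 0 < a₂) (ha₂' : a₂ < 32 / (15 * Real.sqrt 6))
    (φ : ℝ → ℝ) (hφ : Adm1 φ) (hφ0 : φ ≠ 0)
    (hK : Kf1 a₂ φ = 0) (hP : Pf1 a₂ φ = 0) :
    deriv (deriv (fun l : ℝ => Sf1 a₂ (scal1 l φ))) 1
        = -(4/81) * lp1 3 φ - (1/54) * lp1 5 φ + (5*a₂/72) * lp1 4 φ ∧
      -(4/81) * lp1 3 φ - (1/54) * lp1 5 φ + (5*a₂/72) * lp1 4 φ < 0 :=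
  stmt13_general a₂ ha₂' φ hφ hφ0 hK hP
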